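/- arXiv:2504.19563 — 9 statements merged into one kernel-verified Lean document; each statement's English description precedes it below -/
import Mathlib

section
/- An orthoset (X, ⊥) is linear if and only if the following two conditions hold: (L1) for any distinct elements e, f ∈ X there is a g ⊥ e such that {e,f}^⊥ = {e,g}^⊥; (L2) for any distinct elements e, f ∈ X, the set {e,f}^⊥⊥ contains a third element distinct from e and f. -/
/-- The orthocomplement of a set in an orthoset. -/
def perpSet {X : Type*} (perp : X → X → Prop) (A : Set X) : Set X :=
  {e | ∀ f ∈ A, perp e f}

/-- An orthoset `(X, ⊥)` is linear: for any distinct `e, f` there is `g` such that exactly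
one of `f` and `g` is orthogonal to `e` and `{e,f}^⊥ = {e,g}^⊥`. -/
def IsLinearOrthoset {X : Type*} (perp : X → X → Prop) : Prop :=
  ∀ e f : X, e ≠ f → ∃ g : X, Xor' (perp f e) (perp g e) ∧
    perpSet perp {e, f} = perpSet perp {e, g}

lemma mem_perpSet_pair {X : Type*} (perp : X → X → Prop) (a b x : X) :
    x ∈ perpSet perp {a, b} ↔ perp x a ∧ perp x b := by
  simp [perpSet]

/-- Uniqueness: from (L1), an element of `{e,f}^⊥⊥` orthogonal to `e` equals `f`,
provided `f ⊥ e`. -/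
lemma perp_unique {X : Type*} (perp : X → X → Prop)
    (hsymm : ∀ e f, perp e f → perp f e)
    (hirrefl : ∀ e, ¬ perp e e)
    (hL1 : ∀ e f : X, e ≠ f → ∃ g : X, perp g e ∧
      perpSet perp {e, f} = perpSet perp {e, g})
    {e f s : X} (hfe : perp f e) (hse : perp s e)
    (hs : s ∈ perpSet perp (perpSet perp {e, f})) : s = f := by
  by_contra hsf
  obtain ⟨p, hpf, hps⟩ := hL1 f s (fun h => hsf h.symm)
  -- e ∈ {f,s}^⊥ = {f,p}^⊥, so e ⊥ p
  have he : e ∈ perpSet perp {f, s} := by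
    rw [mem_perpSet_pair]
    exact ⟨hsymm f e hfe, hsymm s e hse⟩
  rw [hps, mem_perpSet_pair] at he
  -- p ∈ {e,f}^⊥
  have hp : p ∈ perpSet perp {e, f} := by
    rw [mem_perpSet_pair]
    exact ⟨hsymm e p he.2, hpf⟩
  -- so s ⊥ p
  have hsp : perp s p := hs p hp
  -- p ∈ {f,s}^⊥ = {f,p}^⊥, so p ⊥ p
  have : p ∈ perpSet perp {f, s} := by
    rw [mem_perpSet_pair]
    exact ⟨hpf, hsymm s p hsp⟩
  rw [hps, mem_perpSet_pair] at this
  exact hirrefl p this.2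

/-- An orthoset is linear iff (L1) and (L2) hold. -/
theorem stmt2 {X : Type*} (perp : X → X → Prop)
    (hsymm : ∀ e f, perp e f → perp f e)
    (hirrefl : ∀ e, ¬ perp e e) :
    IsLinearOrthoset perp ↔
      ((∀ e f : X, e ≠ f → ∃ g : X, perp g e ∧
          perpSet perp {e, f} = perpSet perp {e, g}) ∧
       (∀ e f : X, e ≠ f → ∃ g ∈ perpSet perp (perpSet perp {e, f}),
          g ≠ e ∧ g ≠ f)) := by
  constructor
  · intro hlin
    constructor
    · -- L1
      intro e f hef
      by_cases hfe : perp f e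
      · exact ⟨f, hfe, rfl⟩
      · obtain ⟨g, hxor, heq⟩ := hlin e f hef
        rcases hxor with ⟨h, _⟩ | ⟨hge, _⟩
        · exact absurd h hfe
        · exact ⟨g, hge, heq⟩
    · -- L2
      intro e f hef
      obtain ⟨g, hxor, heq⟩ := hlin e f hef
      have hgbp : g ∈ perpSet perp (perpSet perp {e, f}) := by
        intro x hx
        rw [heq, mem_perpSet_pair] at hx
        exact hsymm x g hx.2
      have hgf : g ≠ f := by
        rintro rfl
        rcases hxor with ⟨h1, h2⟩ | ⟨h1, h2⟩ <;> exact h2 h1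
      have hge : g ≠ e := by
        intro hg
        subst hg
        -- then perp g e is false (irrefl), so Xor gives perp f g
        have hfe : perp f g := by
          rcases hxor with ⟨h1, _⟩ | ⟨h1, _⟩
          · exact h1
          · exact absurd h1 (hirrefl g)
        -- f ∈ {g,g}^⊥ = {g,f}^⊥ gives f ⊥ f
        have : f ∈ perpSet perp ({g, g} : Set X) := by
          rw [mem_perpSet_pair]
          exact ⟨hfe, hfe⟩
        rw [← heq, mem_perpSet_pair] at this
        exact hirrefl f this.2
      exact ⟨g, hgbp, hge, hgf⟩
  · rintro ⟨hL1, hL2⟩ e f hef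
    by_cases hfe : perp f e
    · -- need g with ¬ g ⊥ e and equal perpsets
      obtain ⟨t, htbp, hte, htf⟩ := hL2 e f hef
      have hnte : ¬ perp t e := fun h =>
        htf (perp_unique perp hsymm hirrefl hL1 hfe h htbp)
      -- {e,f}^⊥ ⊆ {e,t}^⊥
      have hsub : perpSet perp {e, f} ⊆ perpSet perp {e, t} := by
        intro x hx
        rw [mem_perpSet_pair]
        rw [mem_perpSet_pair] at hx
        exact ⟨hx.1, hsymm t x (htbp x (by rw [mem_perpSet_pair]; exact hx))⟩
      -- L1 at (e,t): s ⊥ e with {e,t}^⊥ = {e,s}^⊥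
      have hetne : e ≠ t := fun h => hte h.symm
      obtain ⟨s, hse, hseq⟩ := hL1 e t hetne
      -- s ∈ {e,f}^⊥⊥
      have hsbp : s ∈ perpSet perp (perpSet perp {e, f}) := by
        intro x hx
        have hx' : x ∈ perpSet perp {e, s} := hseq ▸ hsub hx
        rw [mem_perpSet_pair] at hx'
        exact hsymm x s hx'.2
      -- so s = f
      have hsf : s = f := perp_unique perp hsymm hirrefl hL1 hfe hse hsbp
      refine ⟨t, Or.inl ⟨hfe, hnte⟩, ?_⟩
      rw [hseq, hsf]
    · obtain ⟨g, hge, heq⟩ := hL1 e f hef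
      exact ⟨g, Or.inr ⟨hge, hfe⟩, heq⟩
end

section
/- In a linear orthoset, if e and f are distinct elements with e ⊥ f, and h ∈ {e,f}^⊥⊥ satisfies h ⊥ e, then h = f. -/
/-- In a linear orthoset, if `e ⊥ f` are distinct and `h ∈ {e,f}^⊥⊥` with `h ⊥ e`,
then `h = f`. -/
theorem stmt3 {X : Type*} (perp : X → X → Prop)
    (hsymm : ∀ e f, perp e f → perp f e)
    (hirrefl : ∀ e, ¬ perp e e)
    (hlin : IsLinearOrthoset perp)
    (e f h : X) (hef : e ≠ f) (hperp : perp e f)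
    (hh : h ∈ perpSet perp (perpSet perp {e, f})) (hhe : perp h e) :
    h = f := by
  have hmem : ∀ x a b : X, perp x a → perp x b → x ∈ perpSet perp {a, b} := by
    intro x a b h1 h2 y hy
    rcases hy with rfl | rfl <;> assumption
  -- h is not orthogonal to f
  have hhf : ¬ perp h f := by
    intro hhf
    exact hirrefl h (hh h (hmem h e f hhe hhf))
  by_contra hne
  obtain ⟨g, hx, hset⟩ := hlin f h (fun hfh => hne hfh.symm)
  have hgf : perp g f := by
    rcases hx with ⟨h1, _⟩ | ⟨h1, _⟩
    · exact absurd h1 hhf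
    · exact h1
  have he : e ∈ perpSet perp {f, h} := hmem e f h hperp (hsymm h e hhe)
  have heg : perp e g := (hset ▸ he) g (Or.inr rfl)
  have hg : g ∈ perpSet perp {e, f} := hmem g e f (hsymm e g heg) hgf
  have hhg : perp h g := hh g hg
  have : g ∈ perpSet perp {f, g} := hset ▸ hmem g f h hgf (hsymm h g hhg)
  exact hirrefl g (this g (Or.inr rfl))
end

section
/- Let H be a transitive anisotropic Hermitian space of dimension at least 2 over a *-sfield F. Then F is Pythagorean: for any α, β ∈ F there is γ ∈ F such that αα⋆ + ββ⋆ = γγ⋆. -/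
/-- An (anisotropic) Hermitian space over a ⋆-sfield `F`. -/
structure HermSpace (F : Type*) [DivisionRing F] [StarRing F]
    (H : Type*) [AddCommGroup H] [Module F H] where
  form : H → H → F
  add_left : ∀ u v w : H, form (u + v) w = form u w + form v w
  smul_left : ∀ (a : F) (u w : H), form (a • u) w = a * form u w
  conj_symm : ∀ u v : H, form u v = star (form v u)
  anisotropic : ∀ u : H, form u u = 0 → u = 0

/-- A unitary operator: a linear bijection preserving the Hermitian form. -/
def IsUnitaryOp {F : Type*} [DivisionRing F] [StarRing F]
    {H : Type*} [AddCommGroup H] [Module F H] (hs : HermSpace F H)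
    (U : H →ₗ[F] H) : Prop :=
  Function.Bijective U ∧ ∀ u v : H, hs.form (U u) (U v) = hs.form u v

/-- If `H` is a transitive Hermitian space of dimension `≥ 2` over `F`,
then `F` is Pythagorean. -/
theorem stmt8 {F : Type*} [DivisionRing F] [StarRing F]
    {H : Type*} [AddCommGroup H] [Module F H] (hs : HermSpace F H)
    (hz : ∃ z : H, hs.form z z = 1)
    (htrans : ∀ u v : H, u ≠ 0 → v ≠ 0 →
      ∃ U : H →ₗ[F] H, IsUnitaryOp hs U ∧ U u ∈ Submodule.span F ({v} : Set H))
    (hdim : ∃ u v : H, u ≠ 0 ∧ v ≠ 0 ∧ hs.form u v = 0) :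
    ∀ α β : F, ∃ γ : F, α * star α + β * star β = γ * star γ := by
  -- basic form lemmas
  have add_right : ∀ u v w : H, hs.form u (v + w) = hs.form u v + hs.form u w := by
    intro u v w
    rw [hs.conj_symm, hs.add_left, star_add, ← hs.conj_symm, ← hs.conj_symm]
  have smul_right : ∀ (a : F) (u v : H), hs.form u (a • v) = hs.form u v * star a := by
    intro a u v
    rw [hs.conj_symm, hs.smul_left, star_mul, ← hs.conj_symm]
  have zero_left : ∀ v : H, hs.form 0 v = 0 := by
    intro v
    have := hs.smul_left 0 0 v
    simpa using this
  obtain ⟨z, hzz⟩ := hz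
  have hz0 : z ≠ 0 := by
    intro h
    rw [h, zero_left] at hzz
    exact one_ne_zero hzz.symm
  -- every norm is of the form γ γ*
  have key : ∀ u : H, ∃ γ : F, hs.form u u = γ * star γ := by
    intro u
    by_cases hu : u = 0
    · exact ⟨0, by simp [hu, zero_left]⟩
    · obtain ⟨U, ⟨_, hUf⟩, hspan⟩ := htrans u z hu hz0
      obtain ⟨γ, hγ⟩ := Submodule.mem_span_singleton.mp hspan
      refine ⟨γ, ?_⟩
      have h := hUf u u
      rw [← hγ, hs.smul_left, smul_right, hzz, one_mul] at h
      exact h.symm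
  -- orthonormal pair
  obtain ⟨u, v, hu, hv, huv⟩ := hdim
  obtain ⟨c, hc⟩ := key u
  obtain ⟨d, hd⟩ := key v
  have hc0 : c ≠ 0 := by
    intro h
    exact hu (hs.anisotropic u (by rw [hc, h, zero_mul]))
  have hd0 : d ≠ 0 := by
    intro h
    exact hv (hs.anisotropic v (by rw [hd, h, zero_mul]))
  obtain ⟨e, f, hee, hff, hef, hfe⟩ :
      ∃ e f : H, hs.form e e = 1 ∧ hs.form f f = 1 ∧
        hs.form e f = 0 ∧ hs.form f e = 0 := by
    refine ⟨c⁻¹ • u, d⁻¹ • v, ?_, ?_, ?_, ?_⟩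
    · rw [hs.smul_left, smul_right, hc, star_inv₀, ← mul_assoc, ← mul_assoc,
        inv_mul_cancel₀ hc0, one_mul, mul_inv_cancel₀ (star_ne_zero.mpr hc0)]
    · rw [hs.smul_left, smul_right, hd, star_inv₀, ← mul_assoc, ← mul_assoc,
        inv_mul_cancel₀ hd0, one_mul, mul_inv_cancel₀ (star_ne_zero.mpr hd0)]
    · rw [hs.smul_left, smul_right, huv, zero_mul, mul_zero]
    · rw [hs.conj_symm, hs.smul_left, smul_right, huv, zero_mul, mul_zero, star_zero]
  intro α β
  obtain ⟨γ, hγ⟩ := key (α • e + β • f)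
  refine ⟨γ, ?_⟩
  rw [← hγ, hs.add_left, add_right, add_right, hs.smul_left, hs.smul_left,
    hs.smul_left, hs.smul_left, smul_right, smul_right, smul_right, smul_right,
    hee, hff, hef, hfe]
  simp
end

section
/- Let H be a transitive anisotropic Hermitian space of dimension at least 2 over a *-sfield F. Then F is formally real: for any α₁, …, α_k ∈ F, if α₁α₁⋆ + … + α_kα_k⋆ = 0 then α₁ = … = α_k = 0. -/
section
variable {F : Type*} [DivisionRing F] [StarRing F]
    {H : Type*} [AddCommGroup H] [Module F H] (hs : HermSpace F H)

lemma HS.zero_left (w : H) : hs.form 0 w = 0 := by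
  have h := hs.add_left 0 0 w
  rw [add_zero] at h
  exact (left_eq_add.mp h)

lemma HS.smul_right (b : F) (u v : H) :
    hs.form u (b • v) = hs.form u v * star b := by
  rw [hs.conj_symm, hs.smul_left, star_mul, ← hs.conj_symm]

lemma HS.add_right (u v w : H) :
    hs.form u (v + w) = hs.form u v + hs.form u w := by
  rw [hs.conj_symm, hs.add_left, star_add, ← hs.conj_symm, ← hs.conj_symm]

end

/-- If `H` is a transitive Hermitian space of dimension `≥ 2` over `F`,
then `F` is formally real. -/
theorem stmt9 {F : Type*} [DivisionRing F] [StarRing F]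
    {H : Type*} [AddCommGroup H] [Module F H] (hs : HermSpace F H)
    (hz : ∃ z : H, hs.form z z = 1)
    (htrans : ∀ u v : H, u ≠ 0 → v ≠ 0 →
      ∃ U : H →ₗ[F] H, IsUnitaryOp hs U ∧ U u ∈ Submodule.span F ({v} : Set H))
    (hdim : ∃ u v : H, u ≠ 0 ∧ v ≠ 0 ∧ hs.form u v = 0) :
    ∀ (k : ℕ) (a : Fin k → F), (∑ i, a i * star (a i)) = 0 → ∀ i, a i = 0 := by
  obtain ⟨z, hz1⟩ := hz
  have hzne : z ≠ 0 := by
    intro h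
    rw [h, HS.zero_left hs] at hz1
    exact one_ne_zero hz1.symm
  have normA : ∀ u : H, u ≠ 0 → ∃ γ : F, γ ≠ 0 ∧ hs.form u u = γ * star γ := by
    intro u hu
    obtain ⟨U, ⟨hbij, hpres⟩, hmem⟩ := htrans u z hu hzne
    obtain ⟨c, hc⟩ := Submodule.mem_span_singleton.mp hmem
    refine ⟨c, ?_, ?_⟩
    · intro h
      rw [h, zero_smul] at hc
      have h2 : U u = U 0 := by rw [map_zero]; exact hc.symm
      exact hu (hbij.1 h2)
    · rw [← hpres u u, ← hc, hs.smul_left, HS.smul_right hs, hz1, one_mul]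
  obtain ⟨u, v, hu, hv, huv⟩ := hdim
  have hvu : hs.form v u = 0 := by rw [hs.conj_symm, huv, star_zero]
  have hnu : hs.form u u ≠ 0 := fun h => hu (hs.anisotropic u h)
  have key : ∀ α β : F, α ≠ 0 → β ≠ 0 →
      ∃ γ : F, γ ≠ 0 ∧ α * star α + β * star β = γ * star γ := by
    intro α β hα hβ
    obtain ⟨γu, hγu, hfu⟩ := normA u hu
    obtain ⟨γv, hγv, hfv⟩ := normA v hv
    set a := α * γu⁻¹ with ha
    set b := β * γv⁻¹ with hb
    set w := a • u + b • v with hw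
    have hfw : hs.form w w = α * star α + β * star β := by
      rw [hw, hs.add_left, HS.add_right hs, HS.add_right hs,
        hs.smul_left, hs.smul_left, hs.smul_left, hs.smul_left,
        HS.smul_right hs, HS.smul_right hs, HS.smul_right hs, HS.smul_right hs,
        huv, hvu, hfu, hfv]
      simp only [zero_mul, mul_zero, add_zero, zero_add]
      rw [ha, hb, star_mul, star_mul, star_inv₀, star_inv₀]
      simp [mul_assoc, inv_mul_cancel_left₀, mul_inv_cancel_left₀, hγu, hγv,
        star_ne_zero.mpr hγu, star_ne_zero.mpr hγv]
    have hwne : w ≠ 0 := by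
      intro h
      have h2 : hs.form w u = 0 := by rw [h, HS.zero_left hs]
      rw [hw, hs.add_left, hs.smul_left, hs.smul_left, hvu, mul_zero, add_zero] at h2
      exact (mul_ne_zero (mul_ne_zero hα (inv_ne_zero hγu)) hnu) h2
    obtain ⟨γ, hγ, hfwγ⟩ := normA w hwne
    exact ⟨γ, hγ, by rw [← hfw, hfwγ]⟩
  have main : ∀ (k : ℕ) (a : Fin k → F),
      ((∑ i, a i * star (a i)) = 0 ∧ ∀ i, a i = 0) ∨
      ∃ γ : F, γ ≠ 0 ∧ (∑ i, a i * star (a i)) = γ * star γ := by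
    intro k
    induction k with
    | zero => intro a; left; simp
    | succ n ih =>
      intro a
      rw [Fin.sum_univ_succ]
      rcases ih (fun i => a i.succ) with ⟨hS, hall⟩ | ⟨γ, hγ, hS⟩
      · by_cases h0 : a 0 = 0
        · left
          refine ⟨by rw [hS, h0]; simp, ?_⟩
          intro i
          rcases Fin.eq_zero_or_eq_succ i with rfl | ⟨j, rfl⟩
          · exact h0
          · exact hall j
        · right; exact ⟨a 0, h0, by rw [hS, add_zero]⟩
      · by_cases h0 : a 0 = 0
        · right; exact ⟨γ, hγ, by rw [hS, h0]; simp⟩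
        · right
          obtain ⟨δ, hδ, hδeq⟩ := key (a 0) γ h0 hγ
          exact ⟨δ, hδ, by rw [hS, hδeq]⟩
  intro k a hsum i
  rcases main k a with ⟨_, hall⟩ | ⟨γ, hγ, heq⟩
  · exact hall i
  · exact absurd (heq.symm.trans hsum) (mul_ne_zero hγ (star_ne_zero.mpr hγ))
end

section
/- Let F be a Pythagorean, formally real *-sfield and n ≥ 1. Then F^n, equipped with the standard form ((α₁,…,αₙ),(β₁,…,βₙ)) = α₁β₁⋆ + … + αₙβₙ⋆, is an anisotropic Hermitian space, and it is transitive: for any nonzero u, v ∈ F^n there is a unitary operator U with U(u) ∈ span{v}. -/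
/-!
Pythagoreanity makes every `v ⬝ᵥ star v` a norm `γ * star γ`, and formal reality makes `γ ≠ 0`
for `v ≠ 0`, so every nonzero vector can be rescaled to a unit vector. Gram–Schmidt then
completes a unit vector to an orthonormal basis `q` with prescribed first vector, and the
synthesis map `x ↦ ∑ i, x i • q i` is a unitary operator taking the first standard basis
vector to that unit vector. Composing one such operator for `v` with the inverse of one for
`u` maps `u` into the line spanned by `v`.
-/

namespace PythagoreanStarField

open Matrix

variable {F : Type*} [DivisionRing F] [StarRing F]

variable (F) in
def IsPythagorean : Prop :=
  ∀ α β : F, ∃ γ : F, α * star α + β * star β = γ * star γ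

variable (F) in
def IsFormallyReal : Prop :=
  ∀ (k : ℕ) (a : Fin k → F), ∑ i, a i * star (a i) = 0 → ∀ i, a i = 0

theorem IsPythagorean.exists_dotProduct_star_self_eq (hP : IsPythagorean F) :
    ∀ {k : ℕ} (a : Fin k → F), ∃ γ : F, a ⬝ᵥ star a = γ * star γ
  | 0, _ => ⟨0, by simp⟩
  | _ + 1, a => by
    obtain ⟨δ, hδ⟩ := hP.exists_dotProduct_star_self_eq (Fin.tail a)
    obtain ⟨γ, hγ⟩ := hP (a 0) δ
    refine ⟨γ, ?_⟩
    rw [← hγ, ← hδ]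
    simp only [dotProduct, Fin.sum_univ_succ, Pi.star_apply, Fin.tail]

theorem IsFormallyReal.eq_zero_of_dotProduct_star_self (hR : IsFormallyReal F) {n : ℕ}
    {v : Fin n → F} (hv : v ⬝ᵥ star v = 0) : v = 0 :=
  funext (hR n v hv)

theorem dotProduct_star_smul {m : Type*} [Fintype m] (u v : m → F) (b : F) :
    u ⬝ᵥ star (b • v) = u ⬝ᵥ star v * star b := by
  simp only [dotProduct, Pi.star_apply, Pi.smul_apply, smul_eq_mul, star_mul, Finset.sum_mul,
    mul_assoc]

theorem exists_smul_dotProduct_star_self_eq_one (hP : IsPythagorean F) (hR : IsFormallyReal F)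
    {n : ℕ} {v : Fin n → F} (hv : v ≠ 0) :
    ∃ c : F, c ≠ 0 ∧ (c • v) ⬝ᵥ star (c • v) = 1 := by
  obtain ⟨γ, hγ⟩ := hP.exists_dotProduct_star_self_eq v
  have hγ0 : γ ≠ 0 := by
    rintro rfl
    exact hv (hR.eq_zero_of_dotProduct_star_self (by simpa using hγ))
  refine ⟨γ⁻¹, inv_ne_zero hγ0, ?_⟩
  rw [smul_dotProduct, dotProduct_star_smul, hγ, smul_eq_mul, star_inv₀, ← mul_assoc,
    ← mul_assoc, inv_mul_cancel₀ hγ0, one_mul, mul_inv_cancel₀ (star_ne_zero.mpr hγ0)]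

section Orthonormal

variable {ι m : Type*} [Fintype ι] [DecidableEq ι] [Fintype m]

def IsOrthonormal (p : ι → m → F) : Prop :=
  ∀ i j, p i ⬝ᵥ star (p j) = if i = j then 1 else 0

theorem IsOrthonormal.linearCombination_dotProduct_star {p : ι → m → F} (hp : IsOrthonormal p)
    (c : ι → F) (j : ι) : Fintype.linearCombination F p c ⬝ᵥ star (p j) = c j := by
  simp [Fintype.linearCombination_apply, sum_dotProduct, smul_dotProduct, hp _ j]

theorem IsOrthonormal.linearCombination_dotProduct_star_linearCombination {p : ι → m → F}
    (hp : IsOrthonormal p) (x y : ι → F) :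
    Fintype.linearCombination F p x ⬝ᵥ star (Fintype.linearCombination F p y) =
      x ⬝ᵥ star y := by
  conv_lhs => rw [Fintype.linearCombination_apply, sum_dotProduct]
  refine Finset.sum_congr rfl fun i _ => ?_
  rw [smul_dotProduct, dotProduct_star, hp.linearCombination_dotProduct_star, smul_eq_mul,
    Pi.star_apply]

end Orthonormal

variable {n : ℕ}

theorem IsOrthonormal.exists_ne_zero_forall_dotProduct_star_eq_zero {k : ℕ}
    {p : Fin k → Fin n → F} (hp : IsOrthonormal p) (hk : k < n) :
    ∃ r : Fin n → F, r ≠ 0 ∧ ∀ j, r ⬝ᵥ star (p j) = 0 := by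
  set L := Fintype.linearCombination F p
  obtain ⟨w, hw⟩ : ∃ w, w ∉ LinearMap.range L := by
    by_contra! h
    have hrank := LinearMap.finrank_range_le L
    rw [Submodule.eq_top_iff'.mpr h, finrank_top, Module.finrank_fin_fun,
      Module.finrank_fin_fun] at hrank
    omega
  -- Gram–Schmidt: subtract from `w` its orthogonal projection onto the span of `p`.
  refine ⟨w - L fun i => w ⬝ᵥ star (p i), fun h => hw ⟨_, (sub_eq_zero.mp h).symm⟩, fun j => ?_⟩
  rw [sub_dotProduct, hp.linearCombination_dotProduct_star, sub_self]

theorem IsOrthonormal.snoc {k : ℕ} {p : Fin k → Fin n → F} (hp : IsOrthonormal p)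
    {w : Fin n → F} (hw : w ⬝ᵥ star w = 1) (hwp : ∀ j, w ⬝ᵥ star (p j) = 0) :
    IsOrthonormal (Fin.snoc p w : Fin (k + 1) → Fin n → F) := by
  intro i j
  induction i using Fin.lastCases with
  | last =>
    induction j using Fin.lastCases with
    | last => simpa using hw
    | cast j => simp [hwp j, (Fin.castSucc_lt_last j).ne']
  | cast i =>
    induction j using Fin.lastCases with
    | last => simp [dotProduct_star, hwp i, (Fin.castSucc_lt_last i).ne]
    | cast j => simp [hp i j]

theorem IsOrthonormal.exists_snoc (hP : IsPythagorean F) (hR : IsFormallyReal F) {k : ℕ}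
    {p : Fin k → Fin n → F} (hp : IsOrthonormal p) (hk : k < n) :
    ∃ w, IsOrthonormal (Fin.snoc p w : Fin (k + 1) → Fin n → F) := by
  obtain ⟨r, hr, hrp⟩ := hp.exists_ne_zero_forall_dotProduct_star_eq_zero hk
  obtain ⟨c, -, hc⟩ := exists_smul_dotProduct_star_self_eq_one hP hR hr
  exact ⟨c • r, hp.snoc hc fun j => by rw [smul_dotProduct, hrp, smul_zero]⟩

theorem exists_isOrthonormal_apply_zero_eq (hP : IsPythagorean F) (hR : IsFormallyReal F)
    {m : ℕ} {w : Fin (m + 1) → F} (hw : w ⬝ᵥ star w = 1) :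
    ∃ q : Fin (m + 1) → Fin (m + 1) → F, IsOrthonormal q ∧ q 0 = w := by
  suffices ∀ k ≤ m, ∃ q : Fin (k + 1) → Fin (m + 1) → F, IsOrthonormal q ∧ q 0 = w from
    this m le_rfl
  intro k hk
  induction k with
  | zero =>
    refine ⟨fun _ => w, fun i j => ?_, rfl⟩
    simp [Fin.fin_one_eq_zero i, Fin.fin_one_eq_zero j, hw]
  | succ k ih =>
    obtain ⟨q, hq, hq0⟩ := ih (by omega)
    obtain ⟨w', hw'⟩ := hq.exists_snoc hP hR (by omega)
    exact ⟨_, hw', by rw [← Fin.castSucc_zero, Fin.snoc_castSucc, hq0]⟩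

theorem bijective_of_forall_dotProduct_star_self_eq (hR : IsFormallyReal F)
    {f : (Fin n → F) →ₗ[F] Fin n → F} (hf : ∀ x, f x ⬝ᵥ star (f x) = x ⬝ᵥ star x) :
    Function.Bijective f := by
  have hinj : Function.Injective f := by
    rw [← LinearMap.ker_eq_bot, LinearMap.ker_eq_bot']
    intro x hx
    exact hR.eq_zero_of_dotProduct_star_self (by rw [← hf, hx, zero_dotProduct])
  exact ⟨hinj, LinearMap.injective_iff_surjective.mp hinj⟩

theorem exists_unitary_apply_single_zero (hP : IsPythagorean F) (hR : IsFormallyReal F)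
    {m : ℕ} {u : Fin (m + 1) → F} (hu : u ≠ 0) :
    ∃ (W : (Fin (m + 1) → F) ≃ₗ[F] Fin (m + 1) → F) (c : F), c ≠ 0 ∧
      (∀ x y, W x ⬝ᵥ star (W y) = x ⬝ᵥ star y) ∧ W (Pi.single 0 1) = c • u := by
  obtain ⟨c, hc, hcu⟩ := exists_smul_dotProduct_star_self_eq_one hP hR hu
  obtain ⟨q, hq, hq0⟩ := exists_isOrthonormal_apply_zero_eq hP hR hcu
  have hW := hq.linearCombination_dotProduct_star_linearCombination
  have hbij := bijective_of_forall_dotProduct_star_self_eq hR fun x => hW x x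
  refine ⟨.ofBijective _ hbij, c, hc, hW, ?_⟩
  simp [hq0]

theorem exists_unitary_mem_span_singleton (hP : IsPythagorean F) (hR : IsFormallyReal F)
    {m : ℕ} {u v : Fin (m + 1) → F} (hu : u ≠ 0) (hv : v ≠ 0) :
    ∃ U : (Fin (m + 1) → F) →ₗ[F] Fin (m + 1) → F, Function.Bijective U ∧
      (∀ x y, U x ⬝ᵥ star (U y) = x ⬝ᵥ star y) ∧ U u ∈ Submodule.span F {v} := by
  obtain ⟨Wu, a, ha, hWu, hWu0⟩ := exists_unitary_apply_single_zero hP hR hu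
  obtain ⟨Wv, b, -, hWv, hWv0⟩ := exists_unitary_apply_single_zero hP hR hv
  have hu' : Wu.symm u = a⁻¹ • Pi.single 0 1 := by
    rw [Wu.symm_apply_eq, map_smul, hWu0, smul_smul, inv_mul_cancel₀ ha, one_smul]
  refine ⟨(Wu.symm.trans Wv).toLinearMap, (Wu.symm.trans Wv).bijective, fun x y => ?_, ?_⟩
  · simp only [LinearEquiv.coe_coe, LinearEquiv.trans_apply, hWv]
    rw [← hWu, Wu.apply_symm_apply, Wu.apply_symm_apply]
  · simp only [LinearEquiv.coe_coe, LinearEquiv.trans_apply, hu', map_smul, hWv0, smul_smul]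
    exact Submodule.smul_mem _ _ (Submodule.mem_span_singleton_self v)

end PythagoreanStarField

open PythagoreanStarField in
/-- For a Pythagorean formally real ⋆-sfield `F` and `n ≥ 1`, the space `F^n` with the
standard inner product is an anisotropic Hermitian space and is transitive. -/
theorem stmt11 {F : Type*} [DivisionRing F] [StarRing F]
    (hPyth : ∀ α β : F, ∃ γ : F, α * star α + β * star β = γ * star γ)
    (hFR : ∀ (k : ℕ) (a : Fin k → F), (∑ i, a i * star (a i)) = 0 → ∀ i, a i = 0)
    (n : ℕ) (hn : 1 ≤ n) :
    let g : (Fin n → F) → (Fin n → F) → F := fun u v => ∑ i, u i * star (v i)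
    -- hermitian symmetry
    (∀ u v : Fin n → F, g u v = star (g v u)) ∧
    -- anisotropy
    (∀ u : Fin n → F, g u u = 0 → u = 0) ∧
    -- transitivity
    (∀ u v : Fin n → F, u ≠ 0 → v ≠ 0 →
      ∃ U : (Fin n → F) →ₗ[F] (Fin n → F), Function.Bijective U ∧
        (∀ x y : Fin n → F, g (U x) (U y) = g x y) ∧
        U u ∈ Submodule.span F ({v} : Set (Fin n → F))) := by
  intro g
  obtain ⟨m, rfl⟩ := Nat.exists_eq_add_of_le' hn
  exact ⟨fun u v => Matrix.dotProduct_star u v,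
    fun u => IsFormallyReal.eq_zero_of_dotProduct_star_self hFR,
    fun u v => exists_unitary_mem_span_singleton hPyth hFR⟩
end

section
/- Every flag-transitive orthoset of rank at least 2 is either Boolean or linear. -/
/-- The line through two distinct points: `e ⋆ f = {e,f}^⊥⊥`. -/
def line {X : Type*} (perp : X → X → Prop) (e f : X) : Set X :=
  perpSet perp (perpSet perp {e, f})

/-- An automorphism of an orthoset. -/
def IsOrthoAuto {X : Type*} (perp : X → X → Prop) (τ : X → X) : Prop :=
  Function.Bijective τ ∧ ∀ e f : X, perp e f ↔ perp (τ e) (τ f)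

/-- Flag-transitivity: for any element of a line and any element of a line there is an
automorphism sending one to the other and one line onto the other. -/
def IsFlagTransitive {X : Type*} (perp : X → X → Prop) : Prop :=
  ∀ a b : X, a ≠ b → ∀ c ∈ line perp a b, ∀ d e : X, d ≠ e → ∀ f ∈ line perp d e,
    ∃ τ : X → X, IsOrthoAuto perp τ ∧ τ c = f ∧ τ '' line perp a b = line perp d e

lemma perpSet_anti {X : Type*} (perp : X → X → Prop) {A B : Set X} (h : A ⊆ B) :
    perpSet perp B ⊆ perpSet perp A := fun x hx f hf => hx f (h hf)

lemma subset_double_perp {X : Type*} (perp : X → X → Prop)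
    (hsymm : ∀ e f, perp e f → perp f e) (A : Set X) :
    A ⊆ perpSet perp (perpSet perp A) := fun a ha x hx => hsymm _ _ (hx a ha)

lemma triple_perp {X : Type*} (perp : X → X → Prop)
    (hsymm : ∀ e f, perp e f → perp f e) (A : Set X) :
    perpSet perp (perpSet perp (perpSet perp A)) = perpSet perp A := by
  apply Set.Subset.antisymm
  · exact perpSet_anti perp (subset_double_perp perp hsymm A)
  · exact subset_double_perp perp hsymm (perpSet perp A)

lemma mem_line_left {X : Type*} (perp : X → X → Prop)
    (hsymm : ∀ e f, perp e f → perp f e) (e f : X) : e ∈ line perp e f :=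
  subset_double_perp perp hsymm {e, f} (Set.mem_insert e {f})

lemma image_perpSet {X : Type*} (perp : X → X → Prop) {τ : X → X}
    (hτ : IsOrthoAuto perp τ) (A : Set X) :
    τ '' perpSet perp A = perpSet perp (τ '' A) := by
  obtain ⟨⟨hinj, hsurj⟩, hiff⟩ := hτ
  ext x
  constructor
  · rintro ⟨y, hy, rfl⟩ z ⟨w, hw, rfl⟩
    exact (hiff y w).1 (hy w hw)
  · intro hx
    obtain ⟨y, rfl⟩ := hsurj x
    exact ⟨y, fun w hw => (hiff y w).2 (hx (τ w) ⟨w, hw, rfl⟩), rfl⟩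

lemma image_line {X : Type*} (perp : X → X → Prop) {τ : X → X}
    (hτ : IsOrthoAuto perp τ) (e f : X) :
    τ '' line perp e f = line perp (τ e) (τ f) := by
  unfold line
  rw [image_perpSet perp hτ, image_perpSet perp hτ, Set.image_pair]

/-- Every flag-transitive orthoset of rank ≥ 2 is either Boolean or linear. -/
theorem stmt15 {X : Type*} (perp : X → X → Prop)
    (hsymm : ∀ e f, perp e f → perp f e)
    (hirrefl : ∀ e, ¬ perp e e)
    (hrank : ∃ e f : X, perp e f)
    (hflag : IsFlagTransitive perp) :
    -- Boolean
    (∀ e f : X, e ≠ f → perp e f) ∨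
    -- linear
    (∀ e f : X, e ≠ f → ∃ g : X, Xor' (perp f e) (perp g e) ∧
      perpSet perp {e, f} = perpSet perp {e, g}) := by
  by_cases hbool : ∀ e f : X, e ≠ f → perp e f
  · exact Or.inl hbool
  · right
    push_neg at hbool
    obtain ⟨c, d, hcd, hncd⟩ := hbool
    obtain ⟨a, b, hab⟩ := hrank
    intro e f hef
    by_cases hfe : perp f e
    · -- need non-orthogonal g on line e f
      obtain ⟨τ, hτ, hτc, himg⟩ := hflag c d hcd c (mem_line_left perp hsymm c d)
        e f hef e (mem_line_left perp hsymm e f)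
      refine ⟨τ d, Or.inl ⟨hfe, fun hge => ?_⟩, ?_⟩
      · exact hncd (hsymm _ _ ((hτ.2 d c).2 (by rwa [hτc])))
      · have hline : line perp e (τ d) = line perp e f := by
          rw [← himg, image_line perp hτ, hτc]
        have := congrArg (perpSet perp) hline
        unfold line at this
        rw [triple_perp perp hsymm, triple_perp perp hsymm] at this; exact this.symm
    · -- need orthogonal g on line e f
      have hab' : a ≠ b := fun h => hirrefl a (h ▸ hab)
      obtain ⟨τ, hτ, hτa, himg⟩ := hflag a b hab' a (mem_line_left perp hsymm a b)
        e f hef e (mem_line_left perp hsymm e f)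
      refine ⟨τ b, Or.inr ⟨?_, hfe⟩, ?_⟩
      · exact hsymm _ _ (by rw [← hτa]; exact (hτ.2 a b).1 hab)
      · have hline : line perp e (τ b) = line perp e f := by
          rw [← himg, image_line perp hτ, hτa]
        have := congrArg (perpSet perp) hline
        unfold line at this
        rw [triple_perp perp hsymm, triple_perp perp hsymm] at this; exact this.symm
end

section
/- Every line-symmetric orthoset is flag-transitive. -/
lemma perp_line_eq {X : Type*} (perp : X → X → Prop)
    (hsymm : ∀ e f, perp e f → perp f e) (d e : X) :
    perpSet perp (line perp d e) = perpSet perp {d, e} := by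
  ext g
  constructor
  · intro hg
    intro x hx
    apply hg
    intro h hh
    rcases hx with rfl | rfl
    · exact hsymm _ _ (hh x (by simp))
    · exact hsymm _ _ (hh x (by simp))
  · intro hg x hx
    exact hsymm _ _ (hx g hg)

lemma auto_fix_line {X : Type*} (perp : X → X → Prop)
    (hsymm : ∀ e f, perp e f → perp f e) (d e : X) (σ : X → X)
    (hσ : IsOrthoAuto perp σ)
    (hfix : ∀ z ∈ perpSet perp (line perp d e), σ z = z) :
    ∀ x : X, x ∈ line perp d e ↔ σ x ∈ line perp d e := by
  have hfix' : ∀ z ∈ perpSet perp {d, e}, σ z = z := by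
    rw [← perp_line_eq perp hsymm]; exact hfix
  intro x
  constructor
  · intro hx g hg
    have := (hσ.2 x g).mp (hx g hg)
    rwa [hfix' g hg] at this
  · intro hx g hg
    have := hx g hg
    rw [← hfix' g hg] at this
    exact (hσ.2 x g).mpr this

/-- Every line-symmetric orthoset (line-transitive and line-permutable) is
flag-transitive. -/
theorem stmt16 {X : Type*} (perp : X → X → Prop)
    (hsymm : ∀ e f, perp e f → perp f e)
    (hirrefl : ∀ e, ¬ perp e e)
    -- line-transitive
    (hlt : ∀ a b : X, a ≠ b → ∀ c d : X, c ≠ d →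
      ∃ τ : X → X, IsOrthoAuto perp τ ∧ τ '' line perp a b = line perp c d)
    -- line-permutable: `Aut(X, ℓ)` acts transitively on each line `ℓ`
    (hlp : ∀ a b : X, a ≠ b → ∀ x ∈ line perp a b, ∀ y ∈ line perp a b,
      ∃ τ : X → X, IsOrthoAuto perp τ ∧
        (∀ z ∈ perpSet perp (line perp a b), τ z = z) ∧ τ x = y) :
    -- flag-transitive
    ∀ a b : X, a ≠ b → ∀ c ∈ line perp a b, ∀ d e : X, d ≠ e → ∀ f ∈ line perp d e,
      ∃ τ : X → X, IsOrthoAuto perp τ ∧ τ c = f ∧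
        τ '' line perp a b = line perp d e := by
  intro a b hab c hc d e hde f hf
  obtain ⟨τ₁, hτ₁, himg⟩ := hlt a b hab d e hde
  have hτc : τ₁ c ∈ line perp d e := himg ▸ ⟨c, hc, rfl⟩
  obtain ⟨σ, hσ, hσfix, hσc⟩ := hlp d e hde (τ₁ c) hτc f hf
  refine ⟨σ ∘ τ₁, ⟨hσ.1.comp hτ₁.1, fun x y => (hτ₁.2 x y).trans (hσ.2 _ _)⟩,
    by simpa using hσc, ?_⟩
  have key := auto_fix_line perp hsymm d e σ hσ hσfix
  rw [Set.image_comp, himg]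
  apply Set.eq_of_subset_of_subset
  · rintro _ ⟨x, hx, rfl⟩
    exact (key x).mp hx
  · intro y hy
    obtain ⟨x, rfl⟩ := hσ.1.2 y
    exact ⟨x, (key x).mpr hy, rfl⟩
end

section
/- Let R be the Hilbert field (the least Pythagorean subfield of ℝ) and let F be any Pythagorean, formally real field. Then there exists a ring homomorphism ν: R → F. -/
/-- A subfield `K` of `ℝ` is Pythagorean if for any `a, b ∈ K` there is `c ∈ K`
with `a² + b² = c²`. -/
def PythSubfield (K : Subfield ℝ) : Prop :=
  ∀ a b : ℝ, a ∈ K → b ∈ K → ∃ c ∈ K, a ^ 2 + b ^ 2 = c ^ 2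

/-- The Hilbert field: the least (intersection of all) Pythagorean subfield(s) of `ℝ`. -/
noncomputable def HilbertField : Subfield ℝ :=
  sInf {K : Subfield ℝ | PythSubfield K}

/-!
By Zorn's lemma there is a maximal embedding `ν : L → F` of an intermediate field `ℚ ⊆ L ⊆ ℝ`
into `F`; this needs `F` to contain `ℚ`, i.e. to have characteristic zero, which formal reality
gives. If `a, b ∈ L`, then `√(a² + b²)` is a root of `X² - (a² + b²)`, whose image
`X² - (ν a² + ν b²) = X² - c²` splits in `F` because `F` is Pythagorean. So `ν` extends to
`L(√(a² + b²))`, and maximality forces `√(a² + b²) ∈ L`. Hence `L` is Pythagorean, contains the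
Hilbert field, and `ν` restricts to it.
-/

open Polynomial IntermediateField

theorem charZero_of_sum_sq_eq_zero {F : Type*} [Ring F] [Nontrivial F]
    (hFR : ∀ (k : ℕ) (a : Fin k → F), ∑ i, a i ^ 2 = 0 → ∀ i, a i = 0) : CharZero F :=
  charZero_of_inj_zero fun n hn => by
    by_contra hn0
    exact one_ne_zero <|
      hFR n (fun _ => 1) (by simpa using hn) ⟨0, Nat.pos_of_ne_zero hn0⟩

theorem Polynomial.splits_X_sq_sub_C_sq {K : Type*} [Field K] (c : K) :
    (X ^ 2 - C (c ^ 2)).Splits := by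
  have : X ^ 2 - C (c ^ 2) = (X - C c) * (X - C (-c)) := by
    rw [map_pow, C_neg]
    ring
  rw [this]
  exact (Splits.X_sub_C c).mul (Splits.X_sub_C (-c))

namespace IntermediateField.Lifts

variable {F E K : Type*} [Field F] [Field E] [Field K] [Algebra F E] [Algebra F K]

theorem mem_carrier_of_isMax_of_sq_eq {x : Lifts F E K} (hx : IsMax x) {s : E} {d : x.carrier}
    (hs : s ^ 2 = d) {c : K} (hc : x.emb d = c ^ 2) : s ∈ x.carrier := by
  have hp : (X ^ 2 - C d).Monic := monic_X_pow_sub_C d two_ne_zero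
  have hroot : aeval s (X ^ 2 - C d) = 0 := by
    simp only [map_sub, map_pow, aeval_X, aeval_C, hs]
    exact sub_self _
  have hsplit : ((X ^ 2 - C d).map x.emb.toRingHom).Splits := by
    rw [Polynomial.map_sub, Polynomial.map_pow, map_X, map_C]
    exact hc ▸ splits_X_sq_sub_C_sq c
  obtain ⟨y, hxy, hsy⟩ := x.exists_lift_of_splits' ⟨_, hp, hroot⟩ <|
    Splits.of_dvd hsplit (hp.map _).ne_zero (Polynomial.map_dvd _ (minpoly.dvd _ s hroot))
  exact (hx hxy).1 hsy

end IntermediateField.Lifts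

theorem IntermediateField.Lifts.pythSubfield_carrier_of_isMax {K : Type*} [Field K]
    [CharZero K] (hPyth : ∀ a b : K, ∃ c : K, a ^ 2 + b ^ 2 = c ^ 2) {x : Lifts ℚ ℝ K}
    (hx : IsMax x) :
    PythSubfield x.carrier.toSubfield := by
  intro a b ha hb
  obtain ⟨c, hc⟩ := hPyth (x.emb ⟨a, ha⟩) (x.emb ⟨b, hb⟩)
  have hc' : x.emb (⟨a, ha⟩ ^ 2 + ⟨b, hb⟩ ^ 2) = c ^ 2 := by
    rw [map_add, map_pow, map_pow, hc]
  have hsq : √(a ^ 2 + b ^ 2) ^ 2 = a ^ 2 + b ^ 2 := Real.sq_sqrt (by positivity)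
  exact ⟨_, mem_carrier_of_isMax_of_sq_eq hx hsq hc', hsq.symm⟩

/-- The Hilbert field admits a ring homomorphism into any Pythagorean formally real
field. -/
theorem stmt18 {F : Type*} [Field F]
    (hPyth : ∀ a b : F, ∃ c : F, a ^ 2 + b ^ 2 = c ^ 2)
    (hFR : ∀ (k : ℕ) (a : Fin k → F), (∑ i, a i ^ 2) = 0 → ∀ i, a i = 0) :
    Nonempty (HilbertField →+* F) := by
  have := charZero_of_sum_sq_eq_zero hFR
  obtain ⟨x, hx⟩ := zorn_le fun c hc => Lifts.exists_upper_bound (F := ℚ) (E := ℝ) (K := F) c hc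
  have hle : HilbertField ≤ x.carrier.toSubfield :=
    sInf_le (Lifts.pythSubfield_carrier_of_isMax hPyth hx)
  exact ⟨x.emb.toRingHom.comp (Subfield.inclusion hle)⟩
end

section
/- Let F = ℚ + ℚi + ℚj + ℚk be the rational quaternions with the standard conjugation. Then F is a Pythagorean, formally real *-sfield, but there is no element α ∈ F with α² = 2; in particular, the Hilbert field does not embed into F as a ring. -/
/-! Lagrange's four-square theorem makes every nonnegative rational a quaternion norm, so the
rational quaternions are Pythagorean. A square root of a positive scalar in a quaternion algebra
over an ordered ring is itself a scalar, so `ℍ[ℚ]` has no square root of `2`, whereas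
`√2 = √(1² + 1²)` lies in every Pythagorean subfield of `ℝ`. -/

namespace Quaternion

section OrderedRing

variable {R : Type*} [CommRing R] [LinearOrder R] [IsStrictOrderedRing R]

theorem sum_mul_star_eq_zero_iff {ι : Type*} {s : Finset ι} {a : ι → ℍ[R]} :
    ∑ i ∈ s, a i * star (a i) = 0 ↔ ∀ i ∈ s, a i = 0 := by
  have hcoe : ∑ i ∈ s, a i * star (a i) = ((∑ i ∈ s, normSq (a i) : R) : ℍ[R]) := by
    simp only [self_mul_star, ← algebraMap_def, map_sum]
  rw [hcoe, ← coe_zero, coe_inj, Finset.sum_eq_zero_iff_of_nonneg fun i _ => normSq_nonneg]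
  simp only [normSq_eq_zero, coe_zero]

/-- The imaginary part of `a ^ 2` is `2 * a.re • a.im`, and `a.re = 0` would force
`a ^ 2 = -normSq a ≤ 0`. -/
theorem eq_re_of_sq_eq_coe {a : ℍ[R]} {r : R} (hr : 0 < r) (h : a ^ 2 = r) : a = a.re := by
  have hre := congrArg (·.re) h
  have hI := congrArg (·.imI) h
  have hJ := congrArg (·.imJ) h
  have hK := congrArg (·.imK) h
  simp only [sq, re_mul, imI_mul, imJ_mul, imK_mul, re_coe, imI_coe, imJ_coe, imK_coe] at hre hI hJ hK
  have ha : a.re ≠ 0 := by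
    rintro h0
    rw [h0] at hre
    nlinarith [sq_nonneg a.imI, sq_nonneg a.imJ, sq_nonneg a.imK]
  have h2re : 2 * a.re ≠ 0 := mul_ne_zero two_ne_zero ha
  ext
  · rfl
  · exact (mul_eq_zero.1 (by linear_combination hI)).resolve_left h2re
  · exact (mul_eq_zero.1 (by linear_combination hJ)).resolve_left h2re
  · exact (mul_eq_zero.1 (by linear_combination hK)).resolve_left h2re

theorem isSquare_coe_iff {r : R} (hr : 0 < r) : IsSquare (r : ℍ[R]) ↔ IsSquare r := by
  refine ⟨fun ⟨a, ha⟩ => ⟨a.re, coe_injective ?_⟩, fun ⟨x, hx⟩ => ⟨x, by rw [hx, coe_mul]⟩⟩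
  rw [coe_mul, ← eq_re_of_sq_eq_coe hr (by rw [sq, ha])]
  exact ha

end OrderedRing

theorem exists_normSq_eq_natCast {R : Type*} [CommRing R] (n : ℕ) :
    ∃ γ : ℍ[R], normSq γ = n := by
  obtain ⟨a, b, c, d, h⟩ := Nat.sum_four_squares n
  exact ⟨⟨a, b, c, d⟩, (normSq_def' _).trans (by rw [← h]; push_cast; rfl)⟩

theorem exists_normSq_eq_of_nonneg {q : ℚ} (hq : 0 ≤ q) : ∃ γ : ℍ[ℚ], normSq γ = q := by
  obtain ⟨γ, hγ⟩ := exists_normSq_eq_natCast (R := ℚ) (q.num.toNat * q.den)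
  refine ⟨(q.den : ℚ)⁻¹ • γ, ?_⟩
  have hnum : ((q.num.toNat : ℕ) : ℚ) = q.num := by
    exact_mod_cast Int.toNat_of_nonneg (Rat.num_nonneg.mpr hq)
  rw [normSq_smul, hγ, Nat.cast_mul, hnum]
  conv_rhs => rw [← Rat.num_div_den q]
  field_simp

theorem exists_mul_star_add_mul_star (α β : ℍ[ℚ]) :
    ∃ γ : ℍ[ℚ], α * star α + β * star β = γ * star γ := by
  obtain ⟨γ, hγ⟩ :=
    exists_normSq_eq_of_nonneg (add_nonneg (normSq_nonneg (a := α)) (normSq_nonneg (a := β)))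
  exact ⟨γ, by simp only [self_mul_star, hγ, coe_add]⟩

theorem not_isSquare_two : ¬ IsSquare (2 : ℍ[ℚ]) :=
  (isSquare_coe_iff (R := ℚ) two_pos).not.2 (by norm_num)

end Quaternion

theorem PythSubfield.sqrt_sq_add_sq_mem {K : Subfield ℝ} (hK : PythSubfield K) {a b : ℝ}
    (ha : a ∈ K) (hb : b ∈ K) : √(a ^ 2 + b ^ 2) ∈ K := by
  obtain ⟨c, hc, hsum⟩ := hK a b ha hb
  rw [hsum, Real.sqrt_sq_eq_abs]
  rcases abs_choice c with h | h <;> rw [h]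
  exacts [hc, K.neg_mem hc]

theorem HilbertField.exists_sq_eq_two : ∃ x : HilbertField, x ^ 2 = 2 := by
  have hmem : √2 ∈ HilbertField := Subfield.mem_sInf.2 fun K hK => by
    simpa [one_add_one_eq_two] using PythSubfield.sqrt_sq_add_sq_mem hK K.one_mem K.one_mem
  exact ⟨⟨√2, hmem⟩, Subtype.ext (Real.sq_sqrt zero_le_two)⟩

/-- The rational quaternions form a Pythagorean, formally real ⋆-sfield, but contain no
square root of `2`; in particular the Hilbert field does not embed into them as a ring. -/
theorem stmt19 :
    -- Pythagorean
    (∀ α β : Quaternion ℚ, ∃ γ : Quaternion ℚ,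
        α * star α + β * star β = γ * star γ) ∧
    -- formally real
    (∀ (k : ℕ) (a : Fin k → Quaternion ℚ),
        (∑ i, a i * star (a i)) = 0 → ∀ i, a i = 0) ∧
    -- no square root of 2
    (¬ ∃ α : Quaternion ℚ, α ^ 2 = 2) ∧
    -- the Hilbert field does not embed as a ring
    ¬ Nonempty (HilbertField →+* Quaternion ℚ) := by
  have no_sqrt_two : ¬ ∃ α : Quaternion ℚ, α ^ 2 = 2 := fun ⟨α, hα⟩ =>
    Quaternion.not_isSquare_two ⟨α, by rw [← hα, sq]⟩
  refine ⟨Quaternion.exists_mul_star_add_mul_star,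
    fun k a h i => Quaternion.sum_mul_star_eq_zero_iff.1 h i (Finset.mem_univ i), no_sqrt_two, ?_⟩
  rintro ⟨f⟩
  obtain ⟨x, hx⟩ := HilbertField.exists_sq_eq_two
  exact no_sqrt_two ⟨f x, by rw [← map_pow, hx, map_ofNat]⟩
end
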